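/- Let λ > 2√2·δ > 0, and let H, H₁,…,H_K be symmetric with λI ⪯ H ⪯ LI, ‖H_k − H‖ ≤ δ for all k, H = (1/K)∑ₖH_k. Set μ = 0, γ = 1/8, and H̃⁻¹ = (1/K)∑ₖH_k⁻¹. Then ρ := ‖H̃⁻¹H − I‖ + (γ/K)∑ₖ‖H_k⁻¹H‖ ≤ 2/3. -/

import Mathlib

open scoped Matrix.Norms.L2Operator
open scoped RealInnerProductSpace
open Matrix

noncomputable def opNorm {d : ℕ} (A : Matrix (Fin d) (Fin d) ℝ) : ℝ :=
  ‖(Matrix.toEuclideanCLM (𝕜 := ℝ) A : EuclideanSpace ℝ (Fin d) →L[ℝ] EuclideanSpace ℝ (Fin d))‖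

variable {d : ℕ}

lemma opNorm_eq (A : Matrix (Fin d) (Fin d) ℝ) : opNorm A = ‖A‖ := rfl

lemma inner_tecl (A : Matrix (Fin d) (Fin d) ℝ) (x y : EuclideanSpace ℝ (Fin d)) :
    ⟪x, (Matrix.toEuclideanCLM (𝕜 := ℝ) A) y⟫
      = (WithLp.equiv 2 _ x) ⬝ᵥ (A *ᵥ (WithLp.equiv 2 _ y)) := by
  simp [PiLp.inner_apply, dotProduct, RCLike.inner_apply, Matrix.ofLp_toEuclideanCLM]
  exact Finset.sum_congr rfl fun i _ => mul_comm _ _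

-- selfadjointness transfer
lemma tecl_sym {A : Matrix (Fin d) (Fin d) ℝ} (hA : A.IsHermitian)
    (x y : EuclideanSpace ℝ (Fin d)) :
    ⟪(Matrix.toEuclideanCLM (𝕜 := ℝ) A) x, y⟫ = ⟪x, (Matrix.toEuclideanCLM (𝕜 := ℝ) A) y⟫ := by
  have h : IsSelfAdjoint (Matrix.toEuclideanCLM (𝕜 := ℝ) A) := by
    rw [_root_.IsSelfAdjoint, ← map_star]
    exact congrArg _ hA
  calc ⟪(Matrix.toEuclideanCLM (𝕜 := ℝ) A) x, y⟫
      = ⟪x, (ContinuousLinearMap.adjoint (Matrix.toEuclideanCLM (𝕜 := ℝ) A)) y⟫ := by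
        rw [ContinuousLinearMap.adjoint_inner_right]
    _ = ⟪x, (Matrix.toEuclideanCLM (𝕜 := ℝ) A) y⟫ := by
        rw [show ContinuousLinearMap.adjoint (Matrix.toEuclideanCLM (𝕜 := ℝ) A)
            = Matrix.toEuclideanCLM (𝕜 := ℝ) A from h]

-- PSD transfer
lemma psd_inner {A : Matrix (Fin d) (Fin d) ℝ} (hA : A.PosSemidef)
    (x : EuclideanSpace ℝ (Fin d)) : 0 ≤ ⟪x, (Matrix.toEuclideanCLM (𝕜 := ℝ) A) x⟫ := by
  rw [inner_tecl]
  simpa using hA.dotProduct_mulVec_nonneg (WithLp.equiv 2 _ x)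

-- easy direction: quadratic form bounded by norm
lemma inner_le_norm (A : Matrix (Fin d) (Fin d) ℝ) (x : EuclideanSpace ℝ (Fin d)) :
    ⟪x, (Matrix.toEuclideanCLM (𝕜 := ℝ) A) x⟫ ≤ ‖A‖ * ‖x‖ ^ 2 := by
  calc ⟪x, (Matrix.toEuclideanCLM (𝕜 := ℝ) A) x⟫
      ≤ ‖x‖ * ‖(Matrix.toEuclideanCLM (𝕜 := ℝ) A) x‖ := real_inner_le_norm _ _
    _ ≤ ‖x‖ * (‖A‖ * ‖x‖) := by
        gcongr
        exact (Matrix.toEuclideanCLM (𝕜 := ℝ) A).le_opNorm x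
    _ = ‖A‖ * ‖x‖ ^ 2 := by ring

lemma neg_norm_le_inner (A : Matrix (Fin d) (Fin d) ℝ) (x : EuclideanSpace ℝ (Fin d)) :
    -(‖A‖ * ‖x‖ ^ 2) ≤ ⟪x, (Matrix.toEuclideanCLM (𝕜 := ℝ) A) x⟫ := by
  have := inner_le_norm (-A) x
  rw [map_neg] at this
  simp only [ContinuousLinearMap.neg_apply, inner_neg_right, norm_neg] at this
  linarith

-- hard direction: norm bounded via quadratic form, for PSD symmetric
lemma norm_le_of_inner {A : Matrix (Fin d) (Fin d) ℝ} (hsym : A.IsHermitian)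
    (hpsd : ∀ x : EuclideanSpace ℝ (Fin d), 0 ≤ ⟪x, (Matrix.toEuclideanCLM (𝕜 := ℝ) A) x⟫)
    {c : ℝ} (hc : 0 ≤ c)
    (hub : ∀ x : EuclideanSpace ℝ (Fin d), ⟪x, (Matrix.toEuclideanCLM (𝕜 := ℝ) A) x⟫ ≤ c * ‖x‖ ^ 2) :
    ‖A‖ ≤ c := by
  set T := Matrix.toEuclideanCLM (𝕜 := ℝ) A with hT
  have hsym' : ∀ x y, ⟪T x, y⟫ = ⟪x, T y⟫ := tecl_sym hsym
  refine ContinuousLinearMap.opNorm_le_bound T hc (fun x => ?_)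
  -- Cauchy-Schwarz for the PSD bilinear form
  have cs : ∀ a b : EuclideanSpace ℝ (Fin d), ⟪a, T b⟫ ^ 2 ≤ ⟪a, T a⟫ * ⟪b, T b⟫ := by
    intro a b
    have hq : ∀ t : ℝ, 0 ≤ ⟪b, T b⟫ * (t * t) + (2 * ⟪a, T b⟫) * t + ⟪a, T a⟫ := by
      intro t
      have h0 := hpsd (a + t • b)
      have hba : ⟪b, T a⟫ = ⟪a, T b⟫ := by rw [real_inner_comm, hsym']
      have expand : ⟪a + t • b, T (a + t • b)⟫
          = ⟪b, T b⟫ * (t * t) + (2 * ⟪a, T b⟫) * t + ⟪a, T a⟫ := by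
        simp only [map_add, ContinuousLinearMap.map_smul, inner_add_left, inner_add_right,
          real_inner_smul_left, real_inner_smul_right, hba]
        ring
      rw [expand] at h0; exact h0
    have hd := discrim_le_zero hq
    rw [discrim] at hd
    nlinarith [hd]
  have key := cs x (T x)
  have h1 : ⟪x, T (T x)⟫ = ‖T x‖ ^ 2 := by
    rw [← hsym' x (T x)]
    exact real_inner_self_eq_norm_sq (T x)
  have h2 : ⟪T x, T (T x)⟫ ≤ c * ‖T x‖ ^ 2 := hub (T x)
  have h3 : ⟪x, T x⟫ ≤ c * ‖x‖ ^ 2 := hub x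
  have h4 : 0 ≤ ⟪x, T x⟫ := hpsd x
  have h5 : 0 ≤ ⟪T x, T (T x)⟫ := hpsd (T x)
  -- key : (‖T x‖^2)^2 ≤ ⟪x,Tx⟫ * ⟪Tx, T(Tx)⟫ ≤ c‖x‖² * c‖Tx‖²
  rw [h1] at key
  have h6 : (‖T x‖ ^ 2) ^ 2 ≤ (c * ‖x‖ ^ 2) * (c * ‖T x‖ ^ 2) := by
    calc (‖T x‖ ^ 2) ^ 2 ≤ ⟪x, T x⟫ * ⟪T x, T (T x)⟫ := key
      _ ≤ (c * ‖x‖ ^ 2) * (c * ‖T x‖ ^ 2) := by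
          apply mul_le_mul h3 h2 h5 (by positivity)
  rcases eq_or_lt_of_le (norm_nonneg (T x)) with h|h
  · rw [← h]; positivity
  · have h7 : ‖T x‖ ^ 2 ≤ (c * ‖x‖) ^ 2 := by nlinarith
    nlinarith [h7, mul_nonneg hc (norm_nonneg x), h]

lemma pd_of_qf {M : Matrix (Fin d) (Fin d) ℝ} (hsym : M.IsSymm) {m : ℝ} (hm : 0 < m)
    (hq : ∀ x : EuclideanSpace ℝ (Fin d),
      m * ‖x‖ ^ 2 ≤ ⟪x, (Matrix.toEuclideanCLM (𝕜 := ℝ) M) x⟫) : M.PosDef := by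
  have hher : M.IsHermitian := by
    rw [Matrix.IsHermitian, Matrix.conjTranspose_eq_transpose_of_trivial]; exact hsym
  refine Matrix.posDef_iff_dotProduct_mulVec.mpr ⟨hher, fun v hv => ?_⟩
  have hx : ((WithLp.equiv 2 (Fin d → ℝ)).symm v : EuclideanSpace ℝ (Fin d)) ≠ 0 := by
    simpa using hv
  have h1 := hq ((WithLp.equiv 2 (Fin d → ℝ)).symm v)
  rw [inner_tecl] at h1
  have hn : (0:ℝ) < ‖((WithLp.equiv 2 (Fin d → ℝ)).symm v : EuclideanSpace ℝ (Fin d))‖ :=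
    norm_pos_iff.mpr hx
  have : (WithLp.equiv 2 (Fin d → ℝ)) ((WithLp.equiv 2 (Fin d → ℝ)).symm v) = v := by simp
  rw [this] at h1
  calc (0:ℝ) < m * ‖((WithLp.equiv 2 (Fin d → ℝ)).symm v : EuclideanSpace ℝ (Fin d))‖ ^ 2 :=
        mul_pos hm (pow_pos hn 2)
    _ ≤ v ⬝ᵥ M *ᵥ v := h1
    _ = star v ⬝ᵥ M *ᵥ v := by rw [star_trivial]

lemma inv_qf_le {M : Matrix (Fin d) (Fin d) ℝ} (hM : M.PosDef) {m : ℝ} (hm : 0 < m)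
    (hq : ∀ x : EuclideanSpace ℝ (Fin d),
      m * ‖x‖ ^ 2 ≤ ⟪x, (Matrix.toEuclideanCLM (𝕜 := ℝ) M) x⟫) :
    ‖M⁻¹‖ ≤ 1 / m ∧ M⁻¹ * M = 1 ∧ M * M⁻¹ = 1 := by
  have hdet : IsUnit M.det := (Matrix.isUnit_iff_isUnit_det M).mp hM.isUnit
  have hMr : M * M⁻¹ = 1 := Matrix.mul_nonsing_inv M hdet
  have hMl : M⁻¹ * M = 1 := Matrix.nonsing_inv_mul M hdet
  have hinvpd : M⁻¹.PosDef := hM.inv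
  refine ⟨?_, hMl, hMr⟩
  refine norm_le_of_inner hinvpd.isHermitian (psd_inner hinvpd.posSemidef)
    (by positivity) (fun x => ?_)
  set T := Matrix.toEuclideanCLM (𝕜 := ℝ) M with hT
  set y := (Matrix.toEuclideanCLM (𝕜 := ℝ) M⁻¹) x with hy
  have hTy : T y = x := by
    rw [hy, hT, ← ContinuousLinearMap.comp_apply, ← ContinuousLinearMap.mul_def, ← _root_.map_mul,
      hMr, _root_.map_one, ContinuousLinearMap.one_apply]
  have hyx : m * ‖y‖ ^ 2 ≤ ‖y‖ * ‖x‖ := by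
    calc m * ‖y‖ ^ 2 ≤ ⟪y, T y⟫ := hq y
      _ ≤ ‖y‖ * ‖T y‖ := real_inner_le_norm _ _
      _ = ‖y‖ * ‖x‖ := by rw [hTy]
  have hyle : ‖y‖ ≤ ‖x‖ / m := by
    rcases eq_or_lt_of_le (norm_nonneg y) with h | h
    · rw [← h]; positivity
    · rw [le_div_iff₀ hm]
      nlinarith
  calc ⟪x, (Matrix.toEuclideanCLM (𝕜 := ℝ) M⁻¹) x⟫ = ⟪x, y⟫ := rfl
    _ ≤ ‖x‖ * ‖y‖ := real_inner_le_norm _ _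
    _ ≤ ‖x‖ * (‖x‖ / m) := by gcongr
    _ = 1 / m * ‖x‖ ^ 2 := by ring

lemma norm_one_le_matrix : ‖(1 : Matrix (Fin d) (Fin d) ℝ)‖ ≤ 1 := by
  rw [Matrix.cstar_norm_def, _root_.map_one]
  rw [ContinuousLinearMap.one_def]
  exact ContinuousLinearMap.norm_id_le

lemma aux_arith {lam δ : ℝ} (hδ : 0 < δ) (hlam : 2 * Real.sqrt 2 * δ < lam) :
    1 / (lam - δ) * δ * (1 / lam) * δ + (1 / 8 : ℝ) * (1 + 1 / (lam - δ) * δ) ≤ 2 / 3 := by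
  have hr0 : (0:ℝ) ≤ Real.sqrt 2 := Real.sqrt_nonneg 2
  have hr2 : Real.sqrt 2 ^ 2 = 2 := Real.sq_sqrt (by norm_num)
  have hr1 : (1:ℝ) ≤ Real.sqrt 2 := by nlinarith
  have hδlam : δ < lam := by nlinarith [mul_nonneg (by linarith : (0:ℝ) ≤ Real.sqrt 2 - 1) hδ.le]
  have hlam0 : (0:ℝ) < lam := lt_trans hδ hδlam
  have hc : (0:ℝ) < lam - δ := by linarith
  have h8 : (2 * Real.sqrt 2 * δ) ^ 2 = 8 * δ ^ 2 := by
    rw [mul_pow, mul_pow, hr2]; ring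
  have h9 : 8 * δ ^ 2 ≤ lam ^ 2 := by
    nlinarith [h8, hlam.le, mul_nonneg (sub_nonneg.mpr hlam.le)
      (by nlinarith [mul_nonneg hr0 hδ.le] : (0:ℝ) ≤ lam + 2 * Real.sqrt 2 * δ)]
  have hpoly : 24 * δ ^ 2 + 3 * lam ^ 2 ≤ 16 * ((lam - δ) * lam) := by
    nlinarith [h9, sq_nonneg (3 * lam - (8/3) * δ), sq_nonneg δ]
  have e : 1 / (lam - δ) * δ * (1 / lam) * δ + (1 / 8 : ℝ) * (1 + 1 / (lam - δ) * δ)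
      = (24 * δ ^ 2 + 3 * lam ^ 2) / (24 * ((lam - δ) * lam)) := by
    field_simp
    ring
  rw [e, div_le_iff₀ (mul_pos (by norm_num : (0:ℝ) < 24) (mul_pos hc hlam0))]
  linarith


theorem stmt_12 {d K : ℕ} (hK : 0 < K)
    (lam L δ : ℝ) (hδ : 0 < δ) (hlam : 2 * Real.sqrt 2 * δ < lam) (hlamL : lam ≤ L)
    (H : Matrix (Fin d) (Fin d) ℝ) (Hk : Fin K → Matrix (Fin d) (Fin d) ℝ)
    (hHs : H.IsSymm) (hHks : ∀ k, (Hk k).IsSymm)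
    (hlb : (H - lam • (1 : Matrix (Fin d) (Fin d) ℝ)).PosSemidef)
    (hub : (L • (1 : Matrix (Fin d) (Fin d) ℝ) - H).PosSemidef)
    (hclose : ∀ k, opNorm (Hk k - H) ≤ δ)
    (hH : H = (1 / (K : ℝ)) • ∑ k, Hk k) :
    opNorm (((1 / (K : ℝ)) • ∑ k, (Hk k)⁻¹) * H - 1)
      + ((1 / 8 : ℝ) / (K : ℝ)) * ∑ k, opNorm ((Hk k)⁻¹ * H) ≤ 2 / 3 := by
  have hr0 : (0:ℝ) ≤ Real.sqrt 2 := Real.sqrt_nonneg 2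
  have hr2 : Real.sqrt 2 ^ 2 = 2 := Real.sq_sqrt (by norm_num)
  have hr1 : (1:ℝ) ≤ Real.sqrt 2 := by nlinarith
  have hδlam : δ < lam := by nlinarith [mul_nonneg (by linarith : (0:ℝ) ≤ Real.sqrt 2 - 1) hδ.le]
  have hlam0 : (0:ℝ) < lam := lt_trans hδ hδlam
  have hc : (0:ℝ) < lam - δ := by linarith
  clear hub hlamL
  have hK0 : (0:ℝ) < (K:ℝ) := Nat.cast_pos.mpr hK
  -- quadratic form lower bounds
  have hQH : ∀ x : EuclideanSpace ℝ (Fin d),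
      lam * ‖x‖ ^ 2 ≤ ⟪x, (Matrix.toEuclideanCLM (𝕜 := ℝ) H) x⟫ := by
    intro x
    have h0 := psd_inner hlb x
    have e : Matrix.toEuclideanCLM (𝕜 := ℝ) (H - lam • (1 : Matrix (Fin d) (Fin d) ℝ))
        = Matrix.toEuclideanCLM (𝕜 := ℝ) H - lam • 1 := by
      rw [map_sub, _root_.map_smul, _root_.map_one]
    rw [e] at h0
    simp only [ContinuousLinearMap.sub_apply, ContinuousLinearMap.smul_apply,
      ContinuousLinearMap.one_apply, inner_sub_right, real_inner_smul_right] at h0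
    rw [real_inner_self_eq_norm_sq] at h0
    linarith
  have hQk : ∀ k, ∀ x : EuclideanSpace ℝ (Fin d),
      (lam - δ) * ‖x‖ ^ 2 ≤ ⟪x, (Matrix.toEuclideanCLM (𝕜 := ℝ) (Hk k)) x⟫ := by
    intro k x
    have e : Matrix.toEuclideanCLM (𝕜 := ℝ) (Hk k)
        = Matrix.toEuclideanCLM (𝕜 := ℝ) H + Matrix.toEuclideanCLM (𝕜 := ℝ) (Hk k - H) := by
      rw [← map_add]; congr 1; abel
    have h1 := neg_norm_le_inner (Hk k - H) x
    have h2 : ‖Hk k - H‖ ≤ δ := by have := hclose k; rwa [opNorm_eq] at this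
    have h3 : -(δ * ‖x‖ ^ 2) ≤ ⟪x, (Matrix.toEuclideanCLM (𝕜 := ℝ) (Hk k - H)) x⟫ := by
      refine le_trans ?_ h1
      have : ‖Hk k - H‖ * ‖x‖ ^ 2 ≤ δ * ‖x‖ ^ 2 := by
        apply mul_le_mul_of_nonneg_right h2 (by positivity)
      linarith
    have h4 := hQH x
    rw [e]
    simp only [ContinuousLinearMap.add_apply, inner_add_right]
    linarith
  have hpdH : H.PosDef := pd_of_qf hHs hlam0 hQH
  obtain ⟨hHn, hHl, hHr⟩ := inv_qf_le hpdH hlam0 hQH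
  have hkfacts : ∀ k, ‖(Hk k)⁻¹‖ ≤ 1 / (lam - δ) ∧ (Hk k)⁻¹ * Hk k = 1 ∧ Hk k * (Hk k)⁻¹ = 1 :=
    fun k => inv_qf_le (pd_of_qf (hHks k) hc (hQk k)) hc (hQk k)
  have hEk : ∀ k, ‖H - Hk k‖ ≤ δ := by
    intro k
    rw [norm_sub_rev]
    have := hclose k; rwa [opNorm_eq] at this
  -- per-k identity
  have hid : ∀ k, (Hk k)⁻¹ * H - 1
      = H⁻¹ * (H - Hk k) + (Hk k)⁻¹ * (H - Hk k) * H⁻¹ * (H - Hk k) := by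
    intro k
    obtain ⟨-, hkl, hkr⟩ := hkfacts k
    have h1 : (Hk k)⁻¹ * (H - Hk k) = (Hk k)⁻¹ * H - 1 := by rw [Matrix.mul_sub, hkl]
    have h3 : (Hk k)⁻¹ * (H - Hk k) * H⁻¹ * (H - Hk k)
        = ((Hk k)⁻¹ * H - 1) * (H⁻¹ * (H - Hk k)) := by rw [h1, Matrix.mul_assoc]
    rw [h3]
    have h4 : H⁻¹ * (H - Hk k) + ((Hk k)⁻¹ * H - 1) * (H⁻¹ * (H - Hk k))
        = (Hk k)⁻¹ * H * (H⁻¹ * (H - Hk k)) := by noncomm_ring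
    rw [h4, show (Hk k)⁻¹ * H * (H⁻¹ * (H - Hk k)) = (Hk k)⁻¹ * (H * H⁻¹ * (H - Hk k)) from by
      noncomm_ring, hHr, Matrix.one_mul, h1]
  have hsum0 : (1 / (K:ℝ)) • ∑ k, (H - Hk k) = 0 := by
    rw [Finset.sum_sub_distrib, smul_sub, Finset.sum_const, Finset.card_univ, Fintype.card_fin,
      ← Nat.cast_smul_eq_nsmul ℝ, smul_smul, one_div_mul_cancel (ne_of_gt hK0), one_smul,
      ← hH, sub_self]
  have key : ((1 / (K:ℝ)) • ∑ k, (Hk k)⁻¹) * H - 1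
      = (1 / (K:ℝ)) • ∑ k, ((Hk k)⁻¹ * (H - Hk k) * H⁻¹ * (H - Hk k)) := by
    have e1 : ((1 / (K:ℝ)) • ∑ k, (Hk k)⁻¹) * H = (1 / (K:ℝ)) • ∑ k, ((Hk k)⁻¹ * H) := by
      rw [Matrix.smul_mul, Finset.sum_mul]
    have e2 : (1 : Matrix (Fin d) (Fin d) ℝ)
        = (1 / (K:ℝ)) • ∑ _k : Fin K, (1 : Matrix (Fin d) (Fin d) ℝ) := by
      rw [Finset.sum_const, Finset.card_univ, Fintype.card_fin, ← Nat.cast_smul_eq_nsmul ℝ,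
        smul_smul, one_div_mul_cancel (ne_of_gt hK0), one_smul]
    rw [e1]
    nth_rewrite 1 [e2]
    rw [← smul_sub, ← Finset.sum_sub_distrib]
    rw [Finset.sum_congr rfl (fun k _ => hid k)]
    rw [Finset.sum_add_distrib, smul_add]
    have e3 : (1 / (K:ℝ)) • ∑ k, H⁻¹ * (H - Hk k)
        = H⁻¹ * ((1 / (K:ℝ)) • ∑ k, (H - Hk k)) := by
      rw [← Finset.mul_sum, Matrix.mul_smul]
    rw [e3, hsum0, Matrix.mul_zero, zero_add]
  -- norm bound for each summand
  have hQbound : ∀ k, ‖(Hk k)⁻¹ * (H - Hk k) * H⁻¹ * (H - Hk k)‖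
      ≤ 1 / (lam - δ) * δ * (1 / lam) * δ := by
    intro k
    obtain ⟨hkn, -, -⟩ := hkfacts k
    have u1 : (0:ℝ) ≤ 1 / (lam - δ) := (one_div_pos.mpr hc).le
    have u2 : (0:ℝ) ≤ 1 / lam := (one_div_pos.mpr hlam0).le
    calc ‖(Hk k)⁻¹ * (H - Hk k) * H⁻¹ * (H - Hk k)‖
        ≤ ‖(Hk k)⁻¹ * (H - Hk k) * H⁻¹‖ * ‖H - Hk k‖ := norm_mul_le _ _
      _ ≤ (‖(Hk k)⁻¹ * (H - Hk k)‖ * ‖H⁻¹‖) * ‖H - Hk k‖ := by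
          gcongr
          exact norm_mul_le _ _
      _ ≤ ((‖(Hk k)⁻¹‖ * ‖H - Hk k‖) * ‖H⁻¹‖) * ‖H - Hk k‖ := by
          gcongr
          exact norm_mul_le _ _
      _ ≤ ((1 / (lam - δ) * δ) * (1 / lam)) * δ := by
          apply mul_le_mul _ (hEk k) (norm_nonneg _)
            (mul_nonneg (mul_nonneg u1 hδ.le) u2)
          apply mul_le_mul _ hHn (norm_nonneg _) (mul_nonneg u1 hδ.le)
          exact mul_le_mul hkn (hEk k) (norm_nonneg _) u1
      _ = 1 / (lam - δ) * δ * (1 / lam) * δ := by ring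
  have hterm1 : ‖((1 / (K:ℝ)) • ∑ k, (Hk k)⁻¹) * H - 1‖
      ≤ 1 / (lam - δ) * δ * (1 / lam) * δ := by
    rw [key]
    have b0 : (0:ℝ) ≤ 1 / (lam - δ) * δ * (1 / lam) * δ :=
      mul_nonneg (mul_nonneg (mul_nonneg (one_div_pos.mpr hc).le hδ.le)
        (one_div_pos.mpr hlam0).le) hδ.le
    calc ‖(1 / (K:ℝ)) • ∑ k, ((Hk k)⁻¹ * (H - Hk k) * H⁻¹ * (H - Hk k))‖
        = (1 / (K:ℝ)) * ‖∑ k, ((Hk k)⁻¹ * (H - Hk k) * H⁻¹ * (H - Hk k))‖ := by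
          rw [norm_smul, Real.norm_eq_abs, abs_of_pos (one_div_pos.mpr hK0)]
      _ ≤ (1 / (K:ℝ)) * ∑ k, ‖(Hk k)⁻¹ * (H - Hk k) * H⁻¹ * (H - Hk k)‖ := by
          gcongr
          exact norm_sum_le _ _
      _ ≤ (1 / (K:ℝ)) * ((K:ℝ) * (1 / (lam - δ) * δ * (1 / lam) * δ)) := by
          gcongr
          calc ∑ k, ‖(Hk k)⁻¹ * (H - Hk k) * H⁻¹ * (H - Hk k)‖
              ≤ ∑ _k : Fin K, (1 / (lam - δ) * δ * (1 / lam) * δ) :=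
                Finset.sum_le_sum (fun k _ => hQbound k)
            _ = (K:ℝ) * (1 / (lam - δ) * δ * (1 / lam) * δ) := by
                rw [Finset.sum_const, Finset.card_univ, Fintype.card_fin, nsmul_eq_mul]
      _ = 1 / (lam - δ) * δ * (1 / lam) * δ := by
          field_simp
  have hAk : ∀ k, ‖(Hk k)⁻¹ * H‖ ≤ 1 + 1 / (lam - δ) * δ := by
    intro k
    obtain ⟨hkn, hkl, -⟩ := hkfacts k
    have h2 : (Hk k)⁻¹ * H - 1 = (Hk k)⁻¹ * (H - Hk k) := by rw [Matrix.mul_sub, hkl]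
    have u1 : (0:ℝ) ≤ 1 / (lam - δ) := (one_div_pos.mpr hc).le
    calc ‖(Hk k)⁻¹ * H‖ = ‖1 + ((Hk k)⁻¹ * H - 1)‖ := by congr 1; abel
      _ ≤ ‖(1 : Matrix (Fin d) (Fin d) ℝ)‖ + ‖(Hk k)⁻¹ * H - 1‖ := norm_add_le _ _
      _ ≤ 1 + 1 / (lam - δ) * δ := by
          apply add_le_add norm_one_le_matrix
          rw [h2]
          calc ‖(Hk k)⁻¹ * (H - Hk k)‖ ≤ ‖(Hk k)⁻¹‖ * ‖H - Hk k‖ := norm_mul_le _ _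
            _ ≤ 1 / (lam - δ) * δ := mul_le_mul hkn (hEk k) (norm_nonneg _) u1
  have hterm2 : ((1 / 8 : ℝ) / (K:ℝ)) * ∑ k, ‖(Hk k)⁻¹ * H‖
      ≤ (1 / 8 : ℝ) * (1 + 1 / (lam - δ) * δ) := by
    have hb : (0:ℝ) ≤ 1 + 1 / (lam - δ) * δ :=
      add_nonneg zero_le_one (mul_nonneg (one_div_pos.mpr hc).le hδ.le)
    calc ((1 / 8 : ℝ) / (K:ℝ)) * ∑ k, ‖(Hk k)⁻¹ * H‖
        ≤ ((1 / 8 : ℝ) / (K:ℝ)) * ((K:ℝ) * (1 + 1 / (lam - δ) * δ)) := by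
          gcongr
          calc ∑ k, ‖(Hk k)⁻¹ * H‖ ≤ ∑ _k : Fin K, (1 + 1 / (lam - δ) * δ) :=
                Finset.sum_le_sum (fun k _ => hAk k)
            _ = (K:ℝ) * (1 + 1 / (lam - δ) * δ) := by
                rw [Finset.sum_const, Finset.card_univ, Fintype.card_fin, nsmul_eq_mul]
      _ = (1 / 8 : ℝ) * (1 + 1 / (lam - δ) * δ) := by field_simp
  have goal1 : opNorm (((1 / (K : ℝ)) • ∑ k, (Hk k)⁻¹) * H - 1)
      = ‖((1 / (K : ℝ)) • ∑ k, (Hk k)⁻¹) * H - 1‖ := opNorm_eq _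
  have goal2 : ∑ k, opNorm ((Hk k)⁻¹ * H) = ∑ k, ‖(Hk k)⁻¹ * H‖ :=
    Finset.sum_congr rfl (fun k _ => opNorm_eq _)
  rw [goal1, goal2]
  have hfin := aux_arith hδ hlam
  linarith
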